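/- The improper integral ∫_0^2 8(arcsin(x/2))^2 / (x√(4−x^2)) dx equals 8πG − 14ζ(3), where G is the Catalan constant. -/

import Mathlib

open Real

noncomputable def catalanG : ℝ := ∑' k : ℕ, (-1 : ℝ) ^ k / (2 * (k : ℝ) + 1) ^ 2

noncomputable def zeta3 : ℝ := ∑' k : ℕ, 1 / ((k : ℝ) + 1) ^ 3

open Set MeasureTheory Filter Complex Topology
open scoped FourierTransform

namespace Stmt6Aux

/-! ### Step A: change of variables `x = 2 sin t` -/

lemma image_sin : (fun t => 2 * Real.sin t) '' Ioo 0 (π/2) = Ioo (0:ℝ) 2 := by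
  ext y
  simp only [mem_image, mem_Ioo]
  constructor
  · rintro ⟨t, ⟨ht0, htp⟩, rfl⟩
    have h1 : Real.sin t > 0 :=
      Real.sin_pos_of_pos_of_lt_pi ht0 (htp.trans (by linarith [Real.pi_pos]))
    have h2 : Real.sin t < 1 := by
      have := Real.strictMonoOn_sin (a := t) (b := π/2)
        ⟨by linarith [Real.pi_pos], htp.le⟩ ⟨by linarith [Real.pi_pos], le_refl _⟩ htp
      rwa [Real.sin_pi_div_two] at this
    exact ⟨by linarith, by linarith⟩
  · rintro ⟨hy0, hy2⟩
    refine ⟨Real.arcsin (y/2), ⟨?_, ?_⟩, ?_⟩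
    · exact Real.arcsin_pos.mpr (by linarith)
    · exact Real.arcsin_lt_pi_div_two.mpr (by linarith)
    · rw [Real.sin_arcsin (by linarith) (by linarith)]; ring

lemma inj_sin : InjOn (fun t => 2 * Real.sin t) (Ioo 0 (π/2)) := by
  intro a ha b hb hab
  simp only [mem_Ioo] at ha hb
  simp only [mul_eq_mul_left_iff, OfNat.ofNat_ne_zero, or_false] at hab
  exact Real.injOn_sin ⟨by linarith [ha.1, Real.pi_pos], ha.2.le⟩
    ⟨by linarith [hb.1, Real.pi_pos], hb.2.le⟩ hab

lemma stepA : ∫ x in Ioo (0:ℝ) 2, 8 * (Real.arcsin (x / 2)) ^ 2 / (x * Real.sqrt (4 - x ^ 2))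
    = ∫ t in Ioo 0 (π/2), 4 * t^2 / Real.sin t := by
  rw [← image_sin, MeasureTheory.integral_image_eq_integral_abs_deriv_smul measurableSet_Ioo
      (fun t _ => ((Real.hasDerivAt_sin t).const_mul 2).hasDerivWithinAt) inj_sin]
  apply setIntegral_congr_fun measurableSet_Ioo
  intro t ht
  obtain ⟨ht0, htp⟩ := ht
  have hs : Real.sin t > 0 :=
    Real.sin_pos_of_pos_of_lt_pi ht0 (htp.trans (by linarith [Real.pi_pos]))
  have hc : Real.cos t > 0 := Real.cos_pos_of_mem_Ioo ⟨by linarith [Real.pi_pos], htp⟩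
  have harc : Real.arcsin (2 * Real.sin t / 2) = t := by
    rw [mul_div_cancel_left₀ _ (two_ne_zero)]
    exact Real.arcsin_sin (by linarith [Real.pi_pos]) (by linarith)
  have hsqrt : Real.sqrt (4 - (2 * Real.sin t)^2) = 2 * Real.cos t := by
    have h4 : 4 - (2 * Real.sin t)^2 = (2 * Real.cos t)^2 := by
      have := Real.sin_sq_add_cos_sq t; nlinarith
    rw [h4, Real.sqrt_sq (by linarith)]
  simp only [smul_eq_mul, harc, hsqrt, abs_of_pos (by linarith : (0:ℝ) < 2 * Real.cos t)]
  field_simp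
  ring

/-! ### Step C: exact values of `∫ t² sin((2k+1)t)` -/

lemma sincos_val (k : ℕ) :
    Real.sin ((2*(k:ℝ)+1) * (π/2)) = (-1)^k ∧ Real.cos ((2*(k:ℝ)+1) * (π/2)) = 0 := by
  have h : (2*(k:ℝ)+1) * (π/2) = π/2 + k * π := by ring
  rw [h]
  constructor
  · rw [Real.sin_add_nat_mul_pi, Real.sin_pi_div_two, mul_one]
  · rw [Real.cos_add_nat_mul_pi, Real.cos_pi_div_two, mul_zero]

lemma integral_sq_sin (k : ℕ) :
    ∫ t in (0:ℝ)..(π/2), t^2 * Real.sin ((2*(k:ℝ)+1)*t)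
    = π * (-1)^k / (2*(k:ℝ)+1)^2 - 2 / (2*(k:ℝ)+1)^3 := by
  set c : ℝ := 2*(k:ℝ)+1 with hcdef
  have hc : c ≠ 0 := by positivity
  have key : ∀ t : ℝ, HasDerivAt (fun t => -t^2 * Real.cos (c*t) / c
      + 2*t*Real.sin (c*t)/c^2 + 2*Real.cos (c*t)/c^3) (t^2 * Real.sin (c*t)) t := by
    intro t
    have h1 : HasDerivAt (fun t => Real.cos (c*t)) (-Real.sin (c*t) * c) t := by
      exact ((Real.hasDerivAt_cos (c*t)).comp t ((hasDerivAt_id t).const_mul c)).congr_deriv (by simp)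
    have h2 : HasDerivAt (fun t => Real.sin (c*t)) (Real.cos (c*t) * c) t := by
      exact ((Real.hasDerivAt_sin (c*t)).comp t ((hasDerivAt_id t).const_mul c)).congr_deriv (by simp)
    have hA : HasDerivAt (fun t : ℝ => -t^2 * Real.cos (c*t) / c)
        ((-(2*t) * Real.cos (c*t) + (-t^2) * (-Real.sin (c*t) * c)) / c) t := by
      exact (((hasDerivAt_pow 2 t).neg.mul h1).div_const c).congr_deriv (by simp only [Pi.neg_apply]; ring_nf)
    have hB : HasDerivAt (fun t : ℝ => 2*t*Real.sin (c*t)/c^2)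
        ((2 * Real.sin (c*t) + 2*t*(Real.cos (c*t) * c)) / c^2) t := by
      exact ((((hasDerivAt_id t).const_mul 2).mul h2).div_const _).congr_deriv
        (by simp only [id_eq]; ring)
    have hC : HasDerivAt (fun t : ℝ => 2*Real.cos (c*t)/c^3)
        (2 * (-Real.sin (c*t) * c) / c^3) t := by
      exact ((h1.const_mul 2).div_const _).congr_deriv (by ring)
    have := (hA.add hB).add hC
    exact this.congr_deriv (by field_simp; ring)
  rw [intervalIntegral.integral_eq_sub_of_hasDerivAt (fun t _ => key t)
    (Continuous.intervalIntegrable (by continuity) _ _)]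
  obtain ⟨hs, hcc⟩ := sincos_val k
  have harg : c * (π/2) = (2*(k:ℝ)+1) * (π/2) := by rw [hcdef]
  rw [harg, hs, hcc]
  simp only [mul_zero, zero_mul, Real.cos_zero, Real.sin_zero]
  field_simp
  ring

/-! ### Step B: Dirichlet kernel splitting -/

lemma dirichlet (N : ℕ) (t : ℝ) :
    2 * Real.sin t * ∑ k ∈ Finset.range N, Real.sin ((2*(k:ℝ)+1)*t)
    = 1 - Real.cos (2*(N:ℝ)*t) := by
  induction N with
  | zero => simp
  | succ n ih =>
    rw [Finset.sum_range_succ, mul_add, ih]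
    have h1 : Real.cos ((2*(n:ℝ)+1)*t - t) = Real.cos ((2*(n:ℝ)+1)*t) * Real.cos t
        + Real.sin ((2*(n:ℝ)+1)*t) * Real.sin t := Real.cos_sub _ _
    have h2 : Real.cos ((2*(n:ℝ)+1)*t + t) = Real.cos ((2*(n:ℝ)+1)*t) * Real.cos t
        - Real.sin ((2*(n:ℝ)+1)*t) * Real.sin t := Real.cos_add _ _
    have e1 : (2*(n:ℝ)+1)*t - t = 2*(n:ℝ)*t := by ring
    have e2 : (2*(n:ℝ)+1)*t + t = 2*((n:ℝ)+1)*t := by ring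
    rw [e1] at h1; rw [e2] at h2
    push_cast
    linarith

lemma hIntegrable : IntegrableOn (fun t => 4*t^2/Real.sin t) (Ioo 0 (π/2)) := by
  apply Measure.integrableOn_of_bounded (M := π^2) measure_Ioo_lt_top.ne ?_ ?_
  · exact ((measurable_id.pow_const 2).const_mul 4).div Real.measurable_sin |>.aestronglyMeasurable
  · filter_upwards [ae_restrict_mem measurableSet_Ioo] with t ht
    obtain ⟨ht0, htp⟩ := ht
    have hsin : 2/π * t ≤ Real.sin t := Real.mul_le_sin ht0.le htp.le
    have hsinpos : 0 < Real.sin t := lt_of_lt_of_le (by positivity) hsin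
    rw [Real.norm_eq_abs, _root_.abs_of_nonneg (by positivity)]
    rw [div_le_iff₀ hsinpos]
    have hπ := Real.pi_pos
    have h1 : 2/π * t * π^2 = 2*π*t := by field_simp
    calc 4*t^2 ≤ 2/π*t*π^2 := by rw [h1]; nlinarith
      _ ≤ π^2 * Real.sin t := by nlinarith

lemma sInt (N : ℕ) : IntegrableOn
    (fun t => ∑ k ∈ Finset.range N, 8*(t^2*Real.sin ((2*(k:ℝ)+1)*t))) (Ioo 0 (π/2)) := by
  have : Continuous (fun t => ∑ k ∈ Finset.range N, 8*(t^2*Real.sin ((2*(k:ℝ)+1)*t))) := by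
    apply continuous_finset_sum
    intro k _
    continuity
  exact (integrableOn_Ioc_iff_integrableOn_Ioo).mp (this.integrableOn_Ioc)

lemma sum_val (N : ℕ) :
    ∫ t in Ioo 0 (π/2), ∑ k ∈ Finset.range N, 8*(t^2*Real.sin ((2*(k:ℝ)+1)*t))
    = ∑ k ∈ Finset.range N, 8 * (π * (-1)^k / (2*(k:ℝ)+1)^2 - 2 / (2*(k:ℝ)+1)^3) := by
  rw [← integral_Ioc_eq_integral_Ioo, ← intervalIntegral.integral_of_le (by positivity)]
  rw [intervalIntegral.integral_finset_sum]
  · apply Finset.sum_congr rfl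
    intro k _
    rw [intervalIntegral.integral_const_mul, integral_sq_sin]
  · intro k _
    exact Continuous.intervalIntegrable (by continuity) _ _

lemma stepB (N : ℕ) :
    ∫ t in Ioo 0 (π/2), (4*t^2/Real.sin t) * Real.cos (2*(N:ℝ)*t)
    = (∫ t in Ioo 0 (π/2), 4*t^2/Real.sin t)
      - ∑ k ∈ Finset.range N, 8 * (π * (-1)^k / (2*(k:ℝ)+1)^2 - 2 / (2*(k:ℝ)+1)^3) := by
  rw [← sum_val N, ← integral_sub hIntegrable (sInt N)]
  apply setIntegral_congr_fun measurableSet_Ioo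
  intro t ht
  obtain ⟨ht0, htp⟩ := ht
  have hsin : 0 < Real.sin t :=
    Real.sin_pos_of_pos_of_lt_pi ht0 (htp.trans (by linarith [Real.pi_pos]))
  have hD := dirichlet N t
  have hsum8 : ∑ k ∈ Finset.range N, 8*(t^2*Real.sin ((2*(k:ℝ)+1)*t))
      = 8*t^2 * ∑ k ∈ Finset.range N, Real.sin ((2*(k:ℝ)+1)*t) := by
    rw [Finset.mul_sum]; apply Finset.sum_congr rfl; intro k _; ring
  simp only [hsum8]
  field_simp
  linear_combination (norm := ring_nf) 4 * hD

/-! ### Step D: Riemann–Lebesgue for the remainder -/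

lemma stepD : Tendsto (fun N : ℕ => ∫ t in Ioo 0 (π/2), (4*t^2/Real.sin t) * Real.cos (2*(N:ℝ)*t))
    atTop (𝓝 0) := by
  set F : ℝ → ℂ := (Ioo 0 (π/2)).indicator (fun t => ((4*t^2/Real.sin t : ℝ) : ℂ)) with hF
  have hφ : Tendsto (fun N : ℕ => (N:ℝ)/π) atTop (cocompact ℝ) := by
    rw [cocompact_eq_atBot_atTop]
    exact (tendsto_natCast_atTop_atTop.atTop_div_const Real.pi_pos).mono_right le_sup_right
  have key := (Real.tendsto_integral_exp_smul_cocompact F).comp hφ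
  have heq : ∀ N : ℕ, ∫ t in Ioo 0 (π/2), (4*t^2/Real.sin t) * Real.cos (2*(N:ℝ)*t)
      = (∫ v : ℝ, 𝐞 (-(v * ((N:ℝ)/π))) • F v).re := by
    intro N
    have hind : (fun v : ℝ => 𝐞 (-(v * ((N:ℝ)/π))) • F v)
        = (Ioo 0 (π/2)).indicator
          (fun v => ((𝐞 (-(v * ((N:ℝ)/π))) : Circle) : ℂ) * ((4*v^2/Real.sin v : ℝ) : ℂ)) := by
      funext v
      rw [hF]
      by_cases hv : v ∈ Ioo 0 (π/2)
      · rw [Set.indicator_of_mem hv, Set.indicator_of_mem hv]; rfl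
      · rw [Set.indicator_of_notMem hv, Set.indicator_of_notMem hv, smul_zero]
    rw [hind, integral_indicator measurableSet_Ioo]
    have hint : Integrable
        (fun v => ((𝐞 (-(v * ((N:ℝ)/π))) : Circle) : ℂ) * ((4*v^2/Real.sin v : ℝ) : ℂ))
        (volume.restrict (Ioo 0 (π/2))) := by
      apply Integrable.bdd_mul (c := 1) hIntegrable.ofReal
      · apply Continuous.aestronglyMeasurable
        exact continuous_subtype_val.comp
          (Real.continuous_fourierChar.comp (by continuity))
      · refine Filter.Eventually.of_forall fun x => ?_
        exact (Circle.norm_coe _).le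
    rw [← RCLike.re_to_complex, ← integral_re hint]
    apply setIntegral_congr_fun measurableSet_Ioo
    intro t _
    simp only [RCLike.re_to_complex]
    rw [Real.fourierChar_apply]
    have harg : (2 * π * -(t * ((N:ℝ)/π))) = -(2*(N:ℝ)*t) := by
      field_simp
    rw [harg]
    simp only [RCLike.re_to_complex, Complex.mul_re, Complex.exp_ofReal_mul_I_re,
      Complex.ofReal_re, Complex.ofReal_im, mul_zero, sub_zero, Real.cos_neg]
    ring
  have key2 : Tendsto (fun N : ℕ =>
      (∫ v : ℝ, 𝐞 (-(v * ((N:ℝ)/π))) • F v).re) atTop (𝓝 0) := by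
    have := (Complex.continuous_re.tendsto 0).comp key
    exact this
  exact (funext heq : _) ▸ key2

/-! ### Step E: the series -/

lemma summable_shift (p : ℕ) (hp : 1 < p) : Summable (fun k : ℕ => 1 / ((k:ℝ)+1)^p) := by
  have := (Real.summable_one_div_nat_pow (p := p)).mpr hp
  have h2 := (summable_nat_add_iff (f := fun n : ℕ => 1 / (n:ℝ)^p) 1).mpr this
  refine h2.congr fun k => by push_cast; ring_nf

lemma summable_odd (p : ℕ) (hp : 1 < p) : Summable (fun k : ℕ => 1 / (2*(k:ℝ)+1)^p) := by
  refine Summable.of_nonneg_of_le (fun k => by positivity) (fun k => ?_) (summable_shift p hp)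
  apply div_le_div_of_nonneg_left (by norm_num) (by positivity)
  apply pow_le_pow_left₀ (by positivity)
  · have := Nat.cast_nonneg (α := ℝ) k; linarith

lemma hG : HasSum (fun k : ℕ => (-1 : ℝ) ^ k / (2 * (k : ℝ) + 1) ^ 2) catalanG := by
  have hs : Summable (fun k : ℕ => (-1 : ℝ) ^ k / (2 * (k : ℝ) + 1) ^ 2) := by
    apply Summable.of_abs
    refine (summable_odd 2 one_lt_two).congr fun k => ?_
    rw [_root_.abs_div, _root_.abs_pow, _root_.abs_neg, _root_.abs_one, one_pow, _root_.abs_of_nonneg (by positivity)]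
  exact hs.hasSum

lemma hzs : HasSum (fun k : ℕ => 1 / ((k:ℝ)+1)^3) zeta3 :=
  (summable_shift 3 (by norm_num)).hasSum

lemma test1 : HasSum (fun k : ℕ => 1 / (((2*k:ℕ):ℝ)+1)^3) (∑' k : ℕ, (1:ℝ)/(2*(k:ℝ)+1)^3) := by
  have hA : HasSum (fun k : ℕ => (1:ℝ)/(2*(k:ℝ)+1)^3) (∑' k : ℕ, (1:ℝ)/(2*(k:ℝ)+1)^3) :=
    (summable_odd 3 (by norm_num)).hasSum
  have he : (fun k : ℕ => 1 / (((2*k:ℕ):ℝ)+1)^3) = (fun k : ℕ => (1:ℝ)/(2*(k:ℝ)+1)^3) := by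
    funext k; push_cast; ring_nf
  rw [he]; exact hA

lemma test2 : HasSum (fun k : ℕ => 1 / (((2*k+1:ℕ):ℝ)+1)^3) (1/8 * zeta3) := by
  have h8 := hzs.mul_left (1/8)
  have he : (fun k : ℕ => 1 / (((2*k+1:ℕ):ℝ)+1)^3) = (fun k : ℕ => 1/8 * (1 / ((k:ℝ)+1)^3)) := by
    funext k
    have h1 : (((2*k+1:ℕ):ℝ)+1) = 2*((k:ℝ)+1) := by push_cast; ring
    rw [h1, mul_pow]
    rw [div_mul_eq_div_div]
    norm_num
    rw [div_eq_mul_inv]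
  rw [he]; exact h8

lemma hOdd3 : HasSum (fun k : ℕ => (1:ℝ) / (2*(k:ℝ)+1)^3) (7/8 * zeta3) := by
  have htot := HasSum.even_add_odd (f := fun n : ℕ => 1/((n:ℝ)+1)^3) test1 test2
  have hu := htot.unique hzs
  have hA : HasSum (fun k : ℕ => (1:ℝ)/(2*(k:ℝ)+1)^3) (∑' k : ℕ, (1:ℝ)/(2*(k:ℝ)+1)^3) :=
    (summable_odd 3 (by norm_num)).hasSum
  have hAval : (∑' k : ℕ, (1:ℝ)/(2*(k:ℝ)+1)^3) = 7/8 * zeta3 := by linarith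
  rwa [hAval] at hA

lemma stepE : Tendsto (fun N : ℕ =>
    ∑ k ∈ Finset.range N, 8 * (π * (-1)^k / (2*(k:ℝ)+1)^2 - 2 / (2*(k:ℝ)+1)^3))
    atTop (𝓝 (8 * π * catalanG - 14 * zeta3)) := by
  have h1 := hG.mul_left (8*π)
  have h2 := hOdd3.mul_left 16
  have h := h1.sub h2
  have hfe : (fun k : ℕ => 8*π*((-1:ℝ)^k/(2*(k:ℝ)+1)^2) - 16*(1/(2*(k:ℝ)+1)^3))
      = (fun k : ℕ => 8 * (π * (-1:ℝ)^k / (2*(k:ℝ)+1)^2 - 2 / (2*(k:ℝ)+1)^3)) := by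
    funext k; ring
  rw [hfe] at h
  have hval : 8*π*catalanG - 16*(7/8*zeta3) = 8*π*catalanG - 14*zeta3 := by ring
  rw [hval] at h
  exact h.tendsto_sum_nat

end Stmt6Aux

open Stmt6Aux in
theorem stmt6 :
    ∫ x in (0:ℝ)..2, 8 * (Real.arcsin (x / 2)) ^ 2 / (x * Real.sqrt (4 - x ^ 2))
    = 8 * π * catalanG - 14 * zeta3 := by
  rw [intervalIntegral.integral_of_le (by norm_num : (0:ℝ) ≤ 2),
    integral_Ioc_eq_integral_Ioo, stepA]
  set I : ℝ := ∫ t in Ioo 0 (π/2), 4*t^2/Real.sin t with hI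
  have h1 : Tendsto (fun N : ℕ =>
      I - ∑ k ∈ Finset.range N, 8 * (π * (-1)^k / (2*(k:ℝ)+1)^2 - 2 / (2*(k:ℝ)+1)^3))
      atTop (𝓝 (I - (8 * π * catalanG - 14 * zeta3))) :=
    tendsto_const_nhds.sub stepE
  have h2 : Tendsto (fun N : ℕ =>
      I - ∑ k ∈ Finset.range N, 8 * (π * (-1)^k / (2*(k:ℝ)+1)^2 - 2 / (2*(k:ℝ)+1)^3))
      atTop (𝓝 0) := by
    have := stepD
    refine this.congr fun N => ?_
    rw [stepB N]
  have h3 := tendsto_nhds_unique h1 h2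
  linarith
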